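/- Fix τ₁ > 0, τ₂ > 0, integers K and N with 1 ≤ K and 2K < N, a constant c_h > 0, and real numbers h_1, …, h_N with 0 < h_i ≤ c_h for all i. Then the function L(λ) = (K/N)λ + (τ₂/2)λ² + (1/N) Σ_{i=1}^N τ₁ ln(1 + exp((h_i − λ)/τ₁)) has a unique minimizer λ* over ℝ, the derivative L′(λ) is negative for all λ ≤ 0 and positive for all λ ≥ c_h + τ₁ ln N, and consequently 0 < λ* < c_h + τ₁ ln N. -/

import Mathlib

open Finset

/-- The smoothed lower-level objective
`L(λ) = (K/N)λ + (τ₂/2)λ² + (1/N) Σᵢ τ₁ ln(1 + exp((hᵢ − λ)/τ₁))`. -/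
noncomputable def smoothedL (τ₁ τ₂ : ℝ) (K : ℕ) (N : ℕ) (h : Fin N → ℝ) (lam : ℝ) : ℝ :=
  ((K : ℝ) / N) * lam + (τ₂ / 2) * lam ^ 2 +
    (1 / N : ℝ) * ∑ i, τ₁ * Real.log (1 + Real.exp ((h i - lam) / τ₁))

/-!
The derivative is `L'(λ) = K/N + τ₂ λ - (1/N) Σᵢ σ((hᵢ - λ)/τ₁)` with `σ` the logistic function;
it is strictly increasing, so `L` is strictly convex and has at most one minimizer. For `λ ≤ 0`
every logistic weight exceeds `1/2 > K/N`, while for `λ ≥ c_h + τ₁ ln N` each is at most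
`exp (-ln N) = 1/N ≤ K/N`. Hence `L` decreases up to `0` and increases from `c_h + τ₁ ln N` on,
so its minimum over the compact interval between them is global and lies in the interior.
-/

open Real

namespace Real

lemma sigmoid_eq_exp_div (x : ℝ) : sigmoid x = exp x / (1 + exp x) := by
  rw [sigmoid_def, exp_neg]
  field_simp
  ring

lemma hasDerivAt_log_one_add_exp (x : ℝ) :
    HasDerivAt (fun y => log (1 + exp y)) (sigmoid x) x := by
  convert ((hasDerivAt_exp x).const_add 1).log (by positivity) using 1
  exact sigmoid_eq_exp_div x

lemma half_lt_sigmoid {x : ℝ} (hx : 0 < x) : 1 / 2 < sigmoid x := by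
  simpa [sigmoid_zero] using sigmoid_lt hx

lemma sigmoid_le_exp (x : ℝ) : sigmoid x ≤ exp x := by
  rw [sigmoid_eq_exp_div]
  exact div_le_self (exp_pos x).le (by linarith [exp_pos x])

end Real

theorem exists_mem_Ioo_isMinOn_univ_of_deriv {f : ℝ → ℝ} {a b : ℝ} (hf : Differentiable ℝ f)
    (ha : ∀ x ≤ a, deriv f x < 0) (hb : ∀ x, b ≤ x → 0 < deriv f x) :
    ∃ c ∈ Set.Ioo a b, IsMinOn f Set.univ c := by
  have hab : a ≤ b := le_of_not_gt fun hba => (ha b hba.le).not_gt (hb b le_rfl)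
  obtain ⟨c, ⟨hac, hcb⟩, hminIcc⟩ :=
    isCompact_Icc.exists_isMinOn (Set.nonempty_Icc.2 hab) hf.continuous.continuousOn
  have hanti : StrictAntiOn f (Set.Iic a) :=
    strictAntiOn_of_deriv_neg (convex_Iic a) hf.continuous.continuousOn
      fun x hx => ha x (interior_subset (s := Set.Iic a) hx)
  have hmono : StrictMonoOn f (Set.Ici b) :=
    strictMonoOn_of_deriv_pos (convex_Ici b) hf.continuous.continuousOn
      fun x hx => hb x (interior_subset (s := Set.Ici b) hx)
  have hmin : IsMinOn f Set.univ c := by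
    intro y _
    rcases lt_or_ge y a with hya | hay
    · exact (hminIcc ⟨le_rfl, hab⟩).trans (hanti hya.le Set.self_mem_Iic hya).le
    rcases le_or_gt y b with hyb | hby
    · exact hminIcc ⟨hay, hyb⟩
    · exact (hminIcc ⟨hab, le_rfl⟩).trans (hmono Set.self_mem_Ici hby.le hby).le
  have hcrit : deriv f c = 0 := (hmin.isLocalMin Filter.univ_mem).deriv_eq_zero
  refine ⟨c, ⟨lt_of_le_of_ne hac ?_, lt_of_le_of_ne hcb ?_⟩, hmin⟩
  · rintro rfl
    exact (ha _ le_rfl).ne hcrit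
  · rintro rfl
    exact (hb _ le_rfl).ne' hcrit

section smoothedL

variable {τ₁ τ₂ : ℝ} {K N : ℕ} {h : Fin N → ℝ}

lemma hasDerivAt_smoothedL (hτ₁ : τ₁ ≠ 0) (lam : ℝ) :
    HasDerivAt (smoothedL τ₁ τ₂ K N h)
      ((K : ℝ) / N + τ₂ * lam - (1 / N : ℝ) * ∑ i, sigmoid ((h i - lam) / τ₁)) lam := by
  have hterm (i : Fin N) : HasDerivAt (fun l => τ₁ * log (1 + exp ((h i - l) / τ₁)))
      (-sigmoid ((h i - lam) / τ₁)) lam := by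
    have hinner : HasDerivAt (fun l => (h i - l) / τ₁) (-1 / τ₁) lam := by
      simpa using ((hasDerivAt_id lam).const_sub (h i)).div_const τ₁
    refine (((hasDerivAt_log_one_add_exp _).comp lam hinner).const_mul τ₁).congr_deriv ?_
    field_simp
  have hlin : HasDerivAt (fun l => (K : ℝ) / N * l + τ₂ / 2 * l ^ 2)
      ((K : ℝ) / N + τ₂ * lam) lam := by
    refine (((hasDerivAt_id lam).const_mul ((K : ℝ) / N)).add
      ((hasDerivAt_pow 2 lam).const_mul (τ₂ / 2))).congr_deriv ?_
    simp only [mul_one, Nat.cast_ofNat]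
    ring
  refine (hlin.add ((HasDerivAt.fun_sum fun i _ => hterm i).const_mul (1 / N : ℝ))).congr_deriv ?_
  rw [sum_neg_distrib]
  ring

lemma differentiable_smoothedL (hτ₁ : τ₁ ≠ 0) : Differentiable ℝ (smoothedL τ₁ τ₂ K N h) :=
  fun lam => (hasDerivAt_smoothedL hτ₁ lam).differentiableAt

lemma deriv_smoothedL (hτ₁ : τ₁ ≠ 0) (lam : ℝ) :
    deriv (smoothedL τ₁ τ₂ K N h) lam =
      (K : ℝ) / N + τ₂ * lam - (1 / N : ℝ) * ∑ i, sigmoid ((h i - lam) / τ₁) :=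
  (hasDerivAt_smoothedL hτ₁ lam).deriv

lemma strictMono_deriv_smoothedL (hτ₁ : 0 < τ₁) (hτ₂ : 0 < τ₂) :
    StrictMono (deriv (smoothedL τ₁ τ₂ K N h)) := by
  intro a b hab
  have hsum : ∑ i, sigmoid ((h i - b) / τ₁) ≤ ∑ i, sigmoid ((h i - a) / τ₁) :=
    sum_le_sum fun i _ => sigmoid_le (by gcongr)
  rw [deriv_smoothedL hτ₁.ne', deriv_smoothedL hτ₁.ne']
  nlinarith [mul_le_mul_of_nonneg_left hsum (by positivity : (0 : ℝ) ≤ 1 / N)]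

lemma deriv_smoothedL_neg (hτ₁ : 0 < τ₁) (hτ₂ : 0 ≤ τ₂) (hKN : 2 * K < N) {lam : ℝ}
    (hlam : lam ≤ 0) (hh : ∀ i, lam < h i) : deriv (smoothedL τ₁ τ₂ K N h) lam < 0 := by
  have hN : (0 : ℝ) < N := by exact_mod_cast (Nat.zero_le _).trans_lt hKN
  have hsum : (N : ℝ) * (1 / 2) < ∑ i, sigmoid ((h i - lam) / τ₁) := by
    have hne : (univ : Finset (Fin N)).Nonempty := univ_nonempty_iff.2 ⟨⟨0, by omega⟩⟩
    simpa using sum_lt_sum_of_nonempty hne fun i _ =>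
      half_lt_sigmoid (div_pos (sub_pos.2 (hh i)) hτ₁)
  have hK : (K : ℝ) / N < 1 / 2 := by
    rw [div_lt_iff₀ hN]
    have : (2 * K : ℝ) < N := by exact_mod_cast hKN
    linarith
  have hmean : 1 / 2 < (1 / N : ℝ) * ∑ i, sigmoid ((h i - lam) / τ₁) := by
    rw [one_div_mul_eq_div, lt_div_iff₀ hN]
    linarith
  rw [deriv_smoothedL hτ₁.ne']
  nlinarith [mul_nonpos_of_nonneg_of_nonpos hτ₂ hlam]

lemma deriv_smoothedL_pos (hτ₁ : 0 < τ₁) (hτ₂ : 0 < τ₂) (hK : 1 ≤ K) {lam : ℝ} (hlam : 0 < lam)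
    (hh : ∀ i, h i + τ₁ * log N ≤ lam) : 0 < deriv (smoothedL τ₁ τ₂ K N h) lam := by
  have hterm (i : Fin N) : sigmoid ((h i - lam) / τ₁) ≤ 1 / N := by
    have hN : (0 : ℝ) < N := by exact_mod_cast i.pos
    calc sigmoid ((h i - lam) / τ₁) ≤ exp ((h i - lam) / τ₁) := sigmoid_le_exp _
      _ ≤ exp (-log N) := exp_le_exp.2 <| by
          rw [div_le_iff₀ hτ₁]
          linarith [hh i]
      _ = 1 / N := by rw [exp_neg, exp_log hN, one_div]
  have hsum : ∑ i, sigmoid ((h i - lam) / τ₁) ≤ 1 :=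
    calc ∑ i, sigmoid ((h i - lam) / τ₁) ≤ ∑ _i : Fin N, (1 / N : ℝ) :=
          sum_le_sum fun i _ => hterm i
      _ ≤ 1 := by
        rw [sum_const, card_univ, Fintype.card_fin, nsmul_eq_mul, mul_one_div]
        exact div_self_le_one _
  have hKN : (1 / N : ℝ) ≤ K / N :=
    div_le_div_of_nonneg_right (by exact_mod_cast hK) (by positivity)
  rw [deriv_smoothedL hτ₁.ne']
  nlinarith [mul_le_mul_of_nonneg_left hsum (by positivity : (0 : ℝ) ≤ 1 / N), mul_pos hτ₂ hlam]

end smoothedL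

/-- for `1 ≤ K`, `2K < N` and scores `0 < hᵢ ≤ c_h`, the smoothed objective
`L` has a unique minimizer `λ*`, its derivative is negative on `(-∞, 0]` and positive on
`[c_h + τ₁ ln N, ∞)`, and `0 < λ* < c_h + τ₁ ln N`. -/
theorem smoothedL_minimizer_bounds
    (τ₁ τ₂ : ℝ) (hτ₁ : 0 < τ₁) (hτ₂ : 0 < τ₂) (K N : ℕ)
    (hK : 1 ≤ K) (hKN : 2 * K < N) (c_h : ℝ) (hc : 0 < c_h)
    (h : Fin N → ℝ) (hh : ∀ i, 0 < h i ∧ h i ≤ c_h) :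
    ∃ lamStar : ℝ,
      (∀ μ : ℝ, smoothedL τ₁ τ₂ K N h lamStar ≤ smoothedL τ₁ τ₂ K N h μ) ∧
      (∀ μ : ℝ, (∀ ν : ℝ, smoothedL τ₁ τ₂ K N h μ ≤ smoothedL τ₁ τ₂ K N h ν) →
        μ = lamStar) ∧
      (∀ lam : ℝ, lam ≤ 0 → deriv (smoothedL τ₁ τ₂ K N h) lam < 0) ∧
      (∀ lam : ℝ, c_h + τ₁ * Real.log N ≤ lam →
        0 < deriv (smoothedL τ₁ τ₂ K N h) lam) ∧
      0 < lamStar ∧ lamStar < c_h + τ₁ * Real.log N := by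
  have hneg (lam : ℝ) (hlam : lam ≤ 0) : deriv (smoothedL τ₁ τ₂ K N h) lam < 0 :=
    deriv_smoothedL_neg hτ₁ hτ₂.le hKN hlam fun i => hlam.trans_lt (hh i).1
  have hpos (lam : ℝ) (hlam : c_h + τ₁ * log N ≤ lam) : 0 < deriv (smoothedL τ₁ τ₂ K N h) lam :=
    have hM : 0 < c_h + τ₁ * log N :=
      add_pos_of_pos_of_nonneg hc (mul_nonneg hτ₁.le (log_natCast_nonneg N))
    deriv_smoothedL_pos hτ₁ hτ₂ hK (hM.trans_le hlam) fun i => by linarith [(hh i).2]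
  have hdiff := differentiable_smoothedL (τ₂ := τ₂) (K := K) (h := h) hτ₁.ne'
  obtain ⟨lamStar, ⟨hlow, hupp⟩, hmin⟩ := exists_mem_Ioo_isMinOn_univ_of_deriv hdiff hneg hpos
  have hconv : StrictConvexOn ℝ Set.univ (smoothedL τ₁ τ₂ K N h) :=
    (strictMono_deriv_smoothedL hτ₁ hτ₂).strictConvexOn_univ_of_deriv hdiff.continuous
  refine ⟨lamStar, fun μ => hmin trivial, fun μ hμ => ?_, hneg, hpos, hlow, hupp⟩
  exact hconv.eq_of_isMinOn (fun ν _ => hμ ν) hmin trivial trivial
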